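/- arXiv:1902.04893 — 4 statements merged into one kernel-verified Lean document; each statement's English description precedes it below -/
import Mathlib

section
/- Let z, R be real numbers and let a = max(z, 0) be the ReLU activation of the pre-activation z. Then the Guided Backpropagation backward rule through the ReLU gate coincides with the Rectified Gradient rule at threshold τ = 0: (if a * R > 0 then R else 0) = (if z > 0 then 1 else 0) * (if R > 0 then R else 0). -/
/-- Single-unit identity underlying Proposition 2: the Guided Backpropagation backward
rule through a ReLU gate coincides with the RectGrad rule at threshold τ = 0. -/
theorem guidedBP_eq_rectgrad_zero (z R : ℝ) (a : ℝ) (ha : a = max z 0) :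
    (if a * R > 0 then R else 0) =
      (if z > 0 then (1 : ℝ) else 0) * (if R > 0 then R else 0) := by
  subst ha
  rcases le_or_gt z 0 with hz | hz
  · simp [max_eq_right hz, not_lt.mpr hz]
  · rcases le_or_gt R 0 with hR | hR
    · simp [max_eq_left hz.le, not_lt.mpr hR, mul_nonpos_iff, not_lt.mpr (mul_nonpos_of_nonneg_of_nonpos hz.le hR)]
    · simp [hz, hR, mul_pos hz hR, max_eq_left hz.le]
end

section
/- Fix L : ℕ and for each layer l with 0 ≤ l < L a pre-activation vector z^(l) : ι_l → ℝ, with activations a^(l)_i = max(z^(l)_i, 0), and fix for each l an arbitrary map B_l sending a gradient vector at layer l+1 to a gradient vector at layer l (representing the shared backward pass through affine transformations and pooling). Define two backward sequences from the same top gradient G: the Guided Backpropagation sequence, where at each ReLU gate the gradient R is replaced componentwise by I(z^(l)_i > 0) · I(R_i > 0) · R_i before applying B_l, and the RectGrad-at-τ=0 sequence, where at each ReLU gate the gradient R is replaced componentwise by I(a^(l)_i · R_i > 0) · R_i before applying B_l. Then the two sequences are equal at every layer; in particular the resulting input-layer gradients are equal. -/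
/-- Proposition 2: in an L-layer ReLU network with pre-activations `z l`,
activations `a l i = max (z l i) 0`, and shared backward maps `B l` through
affine/pooling layers, the Guided Backpropagation backward sequence and the
RectGrad (τ = 0) backward sequence started from the same top gradient `G`
agree at every layer; in particular the input-layer gradients are equal.
Here `ι l` indexes the gradient vector at layer `l` (layer `L` is the top,
layer `0` the input), the ReLU gate between layers `l+1` and `l` uses
`z l`, and `B l` sends the (gated) gradient at layer `l+1` to layer `l`. -/
theorem guidedBP_eq_rectgrad_all_layers
    (L : ℕ) (ι : Fin (L + 1) → Type*)
    (z a : ∀ l : Fin L, ι l.succ → ℝ)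
    (ha : ∀ (l : Fin L) (i : ι l.succ), a l i = max (z l i) 0)
    (B : ∀ l : Fin L, (ι l.succ → ℝ) → (ι l.castSucc → ℝ))
    (G : ι (Fin.last L) → ℝ)
    (guided rect : ∀ l : Fin (L + 1), ι l → ℝ)
    (hgTop : guided (Fin.last L) = G)
    (hrTop : rect (Fin.last L) = G)
    (hg : ∀ l : Fin L, guided l.castSucc =
      B l (fun i => (if z l i > 0 then (1 : ℝ) else 0) *
        (if guided l.succ i > 0 then guided l.succ i else 0)))
    (hr : ∀ l : Fin L, rect l.castSucc =
      B l (fun i => if a l i * rect l.succ i > 0 then rect l.succ i else 0)) :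
    ∀ l : Fin (L + 1), guided l = rect l := by
  intro l
  induction l using Fin.reverseInduction with
  | last => rw [hgTop, hrTop]
  | cast l ih =>
    rw [hg, hr, ih]
    have key : (fun i => (if z l i > 0 then (1 : ℝ) else 0) *
        (if rect l.succ i > 0 then rect l.succ i else 0)) =
        (fun i => if a l i * rect l.succ i > 0 then rect l.succ i else 0) := by
      funext i
      have haz : a l i * rect l.succ i > 0 ↔ (z l i > 0 ∧ rect l.succ i > 0) := by
        rw [ha]
        constructor
        · intro h
          rcases le_or_gt (z l i) 0 with h1 | h1
          · rw [max_eq_right h1] at h; simp at h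
          · refine ⟨h1, ?_⟩
            rw [max_eq_left h1.le] at h
            by_contra hc; push_neg at hc; nlinarith
        · rintro ⟨h1, h2⟩
          rw [max_eq_left h1.le]
          exact mul_pos h1 h2
      by_cases hz : z l i > 0 <;> by_cases hrp : rect l.succ i > 0 <;>
        simp [hz, hrp, haz]
    rw [key]
end

section
/- Fix L : ℕ, ε > 0, and for each layer l with 0 ≤ l < L a pre-activation vector z^(l) : ι_l → ℝ, with activations a^(l)_i = max(z^(l)_i, 0), and fix for each l an arbitrary map B_l sending a gradient vector at layer l+1 to a gradient vector at layer l (representing the shared backward pass through affine transformations and pooling). Define two backward sequences from the same top gradient G: the Deconvolution sequence, where at each ReLU gate the gradient R is replaced componentwise by I(R_i > 0) · R_i before applying B_l, and the perturbed RectGrad sequence, where at each ReLU gate the gradient R is replaced componentwise by I((a^(l)_i + ε) · R_i > 0) · R_i before applying B_l. Then the two sequences are equal at every layer; in particular the resulting input-layer gradients are equal. -/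
/-- Proposition 1: in an L-layer ReLU network with pre-activations `z l`,
activations `a l i = max (z l i) 0`, and shared backward maps `B l` through
affine/pooling layers, the Deconvolution backward sequence and the perturbed
RectGrad backward sequence (with fixed ε > 0) started from the same top
gradient `G` agree at every layer; in particular the input-layer gradients
are equal. Here `ι l` indexes the gradient vector at layer `l` (layer `L`
is the top, layer `0` the input), the ReLU gate between layers `l+1` and
`l` uses `a l`, and `B l` sends the (gated) gradient at layer `l+1` to
layer `l`. -/
theorem deconv_eq_rectgrad_perturbed_all_layers
    (L : ℕ) (ε : ℝ) (hε : 0 < ε) (ι : Fin (L + 1) → Type*)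
    (z a : ∀ l : Fin L, ι l.succ → ℝ)
    (ha : ∀ (l : Fin L) (i : ι l.succ), a l i = max (z l i) 0)
    (B : ∀ l : Fin L, (ι l.succ → ℝ) → (ι l.castSucc → ℝ))
    (G : ι (Fin.last L) → ℝ)
    (deconv rect : ∀ l : Fin (L + 1), ι l → ℝ)
    (hdTop : deconv (Fin.last L) = G)
    (hrTop : rect (Fin.last L) = G)
    (hd : ∀ l : Fin L, deconv l.castSucc =
      B l (fun i => if deconv l.succ i > 0 then deconv l.succ i else 0))
    (hr : ∀ l : Fin L, rect l.castSucc =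
      B l (fun i => if (a l i + ε) * rect l.succ i > 0 then rect l.succ i else 0)) :
    ∀ l : Fin (L + 1), deconv l = rect l := by
  intro l
  induction l using Fin.reverseInduction with
  | last => rw [hdTop, hrTop]
  | cast l ih =>
    rw [hd l, hr l, ih]
    apply congrArg
    funext i
    have hpos : 0 < a l i + ε := by
      have : 0 ≤ a l i := by rw [ha]; exact le_max_right _ _
      linarith
    have : (a l i + ε) * rect l.succ i > 0 ↔ rect l.succ i > 0 :=
      mul_pos_iff_of_pos_left hpos
    simp [this]
end

section
/- Let X and Y be independent real-valued random variables, each with the standard Gaussian distribution (mean 0, variance 1). Then the distribution of the product |X| · Y (the product of a half-normal random variable and an independent normal random variable) is not a Gaussian distribution: there exist no m ∈ ℝ and v ≥ 0 such that the law of |X| · Y equals the Gaussian measure with mean m and variance v. -/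
open MeasureTheory ProbabilityTheory NNReal
open Real

-- base conversion lemmas
lemma integrable_gauss01_iff (g : ℝ → ℝ) :
    Integrable g (gaussianReal 0 1) ↔
      Integrable (fun x => g x * gaussianPDFReal 0 1 x) volume := by
  rw [gaussianReal_of_var_ne_zero _ one_ne_zero, gaussianPDF_def,
    integrable_withDensity_iff (measurable_gaussianPDFReal 0 1).ennreal_ofReal
      (Filter.Eventually.of_forall fun _ => ENNReal.ofReal_lt_top)]
  simp_rw [ENNReal.toReal_ofReal (gaussianPDFReal_nonneg 0 1 _)]

lemma integral_gauss01 (g : ℝ → ℝ) :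
    ∫ x, g x ∂(gaussianReal 0 1) = ∫ x, g x * gaussianPDFReal 0 1 x := by
  rw [gaussianReal_of_var_ne_zero _ one_ne_zero, gaussianPDF_def]
  have : (fun x => ENNReal.ofReal (gaussianPDFReal 0 1 x))
      = fun x => ((gaussianPDFReal 0 1 x).toNNReal : ENNReal) := rfl
  rw [this, integral_withDensity_eq_integral_smul
    (measurable_gaussianPDFReal 0 1).real_toNNReal g]
  congr 1 with x
  simp [NNReal.smul_def, Real.coe_toNNReal _ (gaussianPDFReal_nonneg 0 1 x), mul_comm]

lemma gpdf01 (x : ℝ) :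
    gaussianPDFReal 0 1 x = (√(2 * π))⁻¹ * rexp (-(1/2) * x ^ 2) := by
  simp only [gaussianPDFReal, NNReal.coe_one, mul_one, sub_zero]
  ring_nf

lemma integrable_pow_mul_gpdf (n : ℕ) :
    Integrable (fun x : ℝ => x ^ n * gaussianPDFReal 0 1 x) volume := by
  simp_rw [gpdf01, ← mul_assoc, mul_comm _ ((√(2 * π))⁻¹), mul_assoc]
  refine Integrable.const_mul ?_ _
  have h := integrable_rpow_mul_exp_neg_mul_sq (b := 1/2) (by norm_num) (s := n)
    (neg_one_lt_zero.trans_le (Nat.cast_nonneg n))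
  simpa [Real.rpow_natCast] using h

lemma even_moment_formula (n : ℕ) (hn : Even n) :
    ∫ x : ℝ, x ^ n * rexp (-(1/2) * x ^ 2) =
      2 * (((1:ℝ)/2) ^ (-((n:ℝ) + 1)/2) * (1/2) * Real.Gamma (((n:ℝ) + 1)/2)) := by
  calc ∫ x : ℝ, x ^ n * rexp (-(1/2) * x ^ 2)
      = ∫ x : ℝ, (fun t => t ^ n * rexp (-(1/2) * t ^ 2)) |x| := by
        congr with x
        simp [hn.pow_abs, sq_abs]
    _ = 2 * ∫ x in Set.Ioi (0:ℝ), x ^ n * rexp (-(1/2) * x ^ 2) := integral_comp_abs (f := fun t => t ^ n * rexp (-(1/2) * t ^ 2))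
    _ = _ := by
        congr 1
        have h := integral_rpow_mul_exp_neg_mul_rpow (p := 2) (q := (n : ℝ)) (b := 1/2)
          (by norm_num) (neg_one_lt_zero.trans_le (Nat.cast_nonneg n)) (by norm_num)
        rw [← h]
        refine setIntegral_congr_fun measurableSet_Ioi fun x hx => ?_
        rw [show ((n:ℝ)) = ((n:ℕ):ℝ) by norm_num, Real.rpow_natCast,
          show ((2:ℝ)) = ((2:ℕ):ℝ) by norm_num, Real.rpow_natCast]

lemma sqrt_two_pi : √(2 * π) = √2 * √π := Real.sqrt_mul (by norm_num) _

lemma rpow_half_32 : ((1:ℝ)/2) ^ (-(3:ℝ)/2) = 2 * √2 := by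
  rw [show (-(3:ℝ)/2) = -(3/2) by ring, one_div, Real.inv_rpow (by norm_num),
    Real.rpow_neg (by norm_num), inv_inv,
    show ((3:ℝ)/2) = 1 + 1/2 by norm_num, Real.rpow_add (by norm_num), Real.rpow_one,
    ← Real.sqrt_eq_rpow]

lemma rpow_half_52 : ((1:ℝ)/2) ^ (-(5:ℝ)/2) = 4 * √2 := by
  rw [show (-(5:ℝ)/2) = -(5/2) by ring, one_div, Real.inv_rpow (by norm_num),
    Real.rpow_neg (by norm_num), inv_inv,
    show ((5:ℝ)/2) = 2 + 1/2 by norm_num, Real.rpow_add (by norm_num),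
    ← Real.sqrt_eq_rpow, show ((2:ℝ):ℝ) = ((2:ℕ):ℝ) by norm_num, Real.rpow_natCast]
  norm_num

lemma Gamma_32 : Real.Gamma (3/2) = √π / 2 := by
  rw [show ((3:ℝ)/2) = 1/2 + 1 by norm_num, Real.Gamma_add_one (by norm_num),
    Real.Gamma_one_half_eq]
  ring

lemma Gamma_52 : Real.Gamma (5/2) = 3 * √π / 4 := by
  rw [show ((5:ℝ)/2) = 3/2 + 1 by norm_num, Real.Gamma_add_one (by norm_num), Gamma_32]
  ring

lemma moment2 : ∫ x, x ^ 2 ∂(gaussianReal 0 1) = 1 := by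
  rw [integral_gauss01]
  simp_rw [gpdf01, ← mul_assoc, mul_comm _ ((√(2*π))⁻¹), mul_assoc]
  rw [integral_const_mul, even_moment_formula 2 (by norm_num),
    show (-(((2:ℕ):ℝ)+1)/2) = -(3:ℝ)/2 by norm_num,
    show ((((2:ℕ):ℝ)+1)/2) = (3:ℝ)/2 by norm_num,
    rpow_half_32, Gamma_32, sqrt_two_pi]
  have h2 : (0:ℝ) < √2 := by positivity
  have hπ : (0:ℝ) < √π := Real.sqrt_pos.mpr Real.pi_pos
  field_simp

lemma moment4 : ∫ x, x ^ 4 ∂(gaussianReal 0 1) = 3 := by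
  rw [integral_gauss01]
  simp_rw [gpdf01, ← mul_assoc, mul_comm _ ((√(2*π))⁻¹), mul_assoc]
  rw [integral_const_mul, even_moment_formula 4 (by decide),
    show (-(((4:ℕ):ℝ)+1)/2) = -(5:ℝ)/2 by norm_num,
    show ((((4:ℕ):ℝ)+1)/2) = (5:ℝ)/2 by norm_num,
    rpow_half_52, Gamma_52, sqrt_two_pi]
  have h2 : (0:ℝ) < √2 := by positivity
  have hπ : (0:ℝ) < √π := Real.sqrt_pos.mpr Real.pi_pos
  field_simp

lemma integrable_pow_gauss (n : ℕ) :
    Integrable (fun x : ℝ => x ^ n) (gaussianReal 0 1) :=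
  (integrable_gauss01_iff _).mpr (integrable_pow_mul_gpdf n)

lemma gauss_neg_map :
    (gaussianReal 0 1).map (fun x : ℝ => -x) = gaussianReal 0 1 := by
  have h := gaussianReal_map_const_mul (μ := 0) (v := 1) (-1)
  simp only [neg_one_mul, mul_zero] at h
  convert h using 2
  ext; norm_num

lemma odd_moment (n : ℕ) (hn : Odd n) : ∫ x, x ^ n ∂(gaussianReal 0 1) = 0 := by
  have h : ∫ x, x ^ n ∂(gaussianReal 0 1)
      = ∫ x, (-x) ^ n ∂(gaussianReal 0 1) := by
    conv_lhs => rw [← gauss_neg_map]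
    rw [integral_map (f := fun x : ℝ => x ^ n) measurable_neg.aemeasurable
      ((measurable_id'.pow_const n).aestronglyMeasurable)]
  simp_rw [hn.neg_pow] at h
  rw [integral_neg] at h
  linarith

lemma gauss_affine_map (m : ℝ) (v : ℝ≥0) :
    gaussianReal m v = (gaussianReal 0 1).map (fun x => √v * x + m) := by
  have h1 : (fun x : ℝ => √v * x + m) = (fun x => x + m) ∘ (fun x => √v * x) := rfl
  rw [h1, ← Measure.map_map (measurable_id'.add_const m) (measurable_const_mul _)]
  have h2 : (gaussianReal 0 1).map (fun x => √v * x) = gaussianReal 0 v := by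
    have := gaussianReal_map_const_mul (μ := 0) (v := 1) (√v)
    simp only [mul_zero, mul_one] at this
    convert this using 2
    ext
    simp [Real.sq_sqrt v.coe_nonneg]
  rw [h2]
  have := gaussianReal_map_add_const (μ := 0) (v := v) m
  simpa using this.symm

lemma integral_pow_gaussReal (m : ℝ) (v : ℝ≥0) (n : ℕ) :
    ∫ x, x ^ n ∂(gaussianReal m v) = ∫ x, (√v * x + m) ^ n ∂(gaussianReal 0 1) := by
  rw [gauss_affine_map m v, integral_map (f := fun x : ℝ => x ^ n)
    (by fun_prop) ((measurable_id'.pow_const n).aestronglyMeasurable)]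

lemma gauss_moment2 (m : ℝ) (v : ℝ≥0) :
    ∫ x, x ^ 2 ∂(gaussianReal m v) = (v : ℝ) + m ^ 2 := by
  rw [integral_pow_gaussReal]
  have e : (fun x : ℝ => (√v * x + m) ^ 2)
      = fun x => (√(v:ℝ))^2 * x ^ 2 + (2 * √v * m) * x ^ 1 + m ^ 2 := by
    funext x; ring
  have iA : Integrable (fun x : ℝ => (√(v:ℝ))^2 * x ^ 2) (gaussianReal 0 1) :=
    (integrable_pow_gauss 2).const_mul _
  have iB : Integrable (fun x : ℝ => (2 * √v * m) * x ^ 1) (gaussianReal 0 1) :=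
    (integrable_pow_gauss 1).const_mul _
  have iAB : Integrable (fun x : ℝ => (√(v:ℝ))^2 * x ^ 2 + (2 * √v * m) * x ^ 1)
      (gaussianReal 0 1) := iA.add iB
  rw [e, integral_add iAB (integrable_const _), integral_add iA iB,
    integral_const_mul, integral_const_mul, moment2, odd_moment 1 odd_one,
    integral_const, Real.sq_sqrt v.coe_nonneg]
  simp

lemma gauss_moment4 (m : ℝ) (v : ℝ≥0) :
    ∫ x, x ^ 4 ∂(gaussianReal m v) = 3 * (v : ℝ) ^ 2 + 6 * v * m ^ 2 + m ^ 4 := by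
  rw [integral_pow_gaussReal]
  have hv : (√(v:ℝ)) ^ 2 = (v:ℝ) := Real.sq_sqrt v.coe_nonneg
  have e : (fun x : ℝ => (√v * x + m) ^ 4)
      = fun x => (√(v:ℝ))^4 * x ^ 4 + (4 * (√v)^3 * m) * x ^ 3
          + (6 * (√v)^2 * m ^ 2) * x ^ 2 + (4 * √v * m ^ 3) * x ^ 1 + m ^ 4 := by
    funext x; ring
  have iA : Integrable (fun x : ℝ => (√(v:ℝ))^4 * x ^ 4) (gaussianReal 0 1) :=
    (integrable_pow_gauss 4).const_mul _
  have iB : Integrable (fun x : ℝ => (4 * (√(v:ℝ))^3 * m) * x ^ 3) (gaussianReal 0 1) :=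
    (integrable_pow_gauss 3).const_mul _
  have iC : Integrable (fun x : ℝ => (6 * (√(v:ℝ))^2 * m ^ 2) * x ^ 2) (gaussianReal 0 1) :=
    (integrable_pow_gauss 2).const_mul _
  have iD : Integrable (fun x : ℝ => (4 * √(v:ℝ) * m ^ 3) * x ^ 1) (gaussianReal 0 1) :=
    (integrable_pow_gauss 1).const_mul _
  have iAB : Integrable (fun x : ℝ => (√(v:ℝ))^4 * x ^ 4 + (4 * (√v)^3 * m) * x ^ 3)
      (gaussianReal 0 1) := iA.add iB
  have iABC : Integrable (fun x : ℝ => (√(v:ℝ))^4 * x ^ 4 + (4 * (√v)^3 * m) * x ^ 3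
      + (6 * (√v)^2 * m ^ 2) * x ^ 2) (gaussianReal 0 1) := iAB.add iC
  have iABCD : Integrable (fun x : ℝ => (√(v:ℝ))^4 * x ^ 4 + (4 * (√v)^3 * m) * x ^ 3
      + (6 * (√v)^2 * m ^ 2) * x ^ 2 + (4 * √v * m ^ 3) * x ^ 1) (gaussianReal 0 1) :=
    iABC.add iD
  rw [e, integral_add iABCD (integrable_const _), integral_add iABC iD,
    integral_add iAB iC, integral_add iA iB,
    integral_const_mul, integral_const_mul, integral_const_mul, integral_const_mul,
    moment2, moment4, odd_moment 1 odd_one, odd_moment 3 (by decide), integral_const]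
  have h4 : (√(v:ℝ)) ^ 4 = (v:ℝ) ^ 2 := by
    rw [show 4 = 2 * 2 from rfl, pow_mul, hv]
  simp [h4, hv]
  ring


/-- The product of a half-normal random variable and an independent standard
normal random variable is not Gaussian distributed: if `X` and `Y` are
independent standard Gaussian random variables, then there are no `m : ℝ` and
`v ≥ 0` (encoded as `v : ℝ≥0`) such that the law of `|X| * Y` is the Gaussian
measure with mean `m` and variance `v`. -/
theorem halfNormal_mul_normal_not_gaussian
    {Ω : Type*} [MeasurableSpace Ω] (μ : Measure Ω) [IsProbabilityMeasure μ]
    (X Y : Ω → ℝ) (hX : Measurable X) (hY : Measurable Y)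
    (hindep : IndepFun X Y μ)
    (hXlaw : μ.map X = gaussianReal 0 1)
    (hYlaw : μ.map Y = gaussianReal 0 1) :
    ¬ ∃ (m : ℝ) (v : ℝ≥0), μ.map (fun ω => |X ω| * Y ω) = gaussianReal m v := by
  rintro ⟨m, v, h⟩
  set Z : Ω → ℝ := fun ω => |X ω| * Y ω with hZdef
  have hZ : Measurable Z := hX.abs.mul hY
  -- integrability of powers
  have key : ∀ (W : Ω → ℝ), Measurable W → μ.map W = gaussianReal 0 1 →
      ∀ n : ℕ, Integrable (fun ω => W ω ^ n) μ ∧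
        ∫ ω, W ω ^ n ∂μ = ∫ x, x ^ n ∂(gaussianReal 0 1) := by
    intro W hW hWlaw n
    constructor
    · have h1 := integrable_pow_gauss n
      rw [← hWlaw] at h1
      have := (integrable_map_measure
        ((measurable_id'.pow_const n).aestronglyMeasurable) hW.aemeasurable).mp h1
      exact this
    · rw [← hWlaw, integral_map (f := fun x : ℝ => x ^ n) hW.aemeasurable
        ((measurable_id'.pow_const n).aestronglyMeasurable)]
  -- second moment of Z
  have hi2 : IndepFun (fun ω => X ω ^ 2) (fun ω => Y ω ^ 2) μ :=
    hindep.comp (measurable_id'.pow_const 2) (measurable_id'.pow_const 2)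
  have hi4 : IndepFun (fun ω => X ω ^ 4) (fun ω => Y ω ^ 4) μ :=
    hindep.comp (measurable_id'.pow_const 4) (measurable_id'.pow_const 4)
  have hZ2 : ∫ ω, Z ω ^ 2 ∂μ = 1 := by
    have e : (fun ω => Z ω ^ 2) = fun ω => X ω ^ 2 * Y ω ^ 2 := by
      funext ω; rw [hZdef]; simp [mul_pow, sq_abs]
    rw [e]
    have := hi2.integral_mul_eq_mul_integral (key X hX hXlaw 2).1.aestronglyMeasurable (key Y hY hYlaw 2).1.aestronglyMeasurable
    rw [show (fun ω => X ω ^ 2 * Y ω ^ 2)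
        = (fun ω => X ω ^ 2) * (fun ω => Y ω ^ 2) from rfl]
    rw [this, (key X hX hXlaw 2).2, (key Y hY hYlaw 2).2, moment2, mul_one]
  have hZ4 : ∫ ω, Z ω ^ 4 ∂μ = 9 := by
    have e : (fun ω => Z ω ^ 4) = fun ω => X ω ^ 4 * Y ω ^ 4 := by
      funext ω; rw [hZdef]; simp [mul_pow, Even.pow_abs (by decide : Even 4)]
    rw [e]
    have := hi4.integral_mul_eq_mul_integral (key X hX hXlaw 4).1.aestronglyMeasurable (key Y hY hYlaw 4).1.aestronglyMeasurable
    rw [show (fun ω => X ω ^ 4 * Y ω ^ 4)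
        = (fun ω => X ω ^ 4) * (fun ω => Y ω ^ 4) from rfl]
    rw [this, (key X hX hXlaw 4).2, (key Y hY hYlaw 4).2, moment4]
    norm_num
  -- moments from the Gaussian law
  have hm2 : ∫ ω, Z ω ^ 2 ∂μ = (v : ℝ) + m ^ 2 := by
    rw [← gauss_moment2 m v, ← h, integral_map (f := fun x : ℝ => x ^ 2) hZ.aemeasurable
      ((measurable_id'.pow_const 2).aestronglyMeasurable)]
  have hm4 : ∫ ω, Z ω ^ 4 ∂μ = 3 * (v : ℝ) ^ 2 + 6 * v * m ^ 2 + m ^ 4 := by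
    rw [← gauss_moment4 m v, ← h, integral_map (f := fun x : ℝ => x ^ 4) hZ.aemeasurable
      ((measurable_id'.pow_const 4).aestronglyMeasurable)]
  have h1 : (v : ℝ) + m ^ 2 = 1 := by rw [← hm2, hZ2]
  have h2 : 3 * (v : ℝ) ^ 2 + 6 * v * m ^ 2 + m ^ 4 = 9 := by rw [← hm4, hZ4]
  have hv0 : (0 : ℝ) ≤ v := v.coe_nonneg
  nlinarith [sq_nonneg (m ^ 2), sq_nonneg ((v:ℝ) - m ^ 2), sq_nonneg ((v:ℝ) + m ^ 2)]
end
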